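/- The Mallows-RMJ top-k probabilities sum to 1: for an injective ranking on a finite set S with |S| = n, φ > 0, and 1 ≤ k ≤ n, the sum over all ordered k-tuples (y_1,…,y_k) of distinct elements of S of (ψ(n−k,φ)/ψ(n,φ)) · φ^{d(μ^k,S)} equals 1, where d(μ^k,S) = Σ_{i=1}^{k−1} 𝟙{y_i ranked worse than y_{i+1}}·(n−i) + Σ_{y_j ∈ S\{y_1,…,y_k}} 𝟙{y_k ranked worse than y_j}. -/

import Mathlib

/-- `ψ m φ = ∏_{i=1}^{m} (1 + φ + ⋯ + φ^{i-1})`, with `ψ 0 φ = 1`. -/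
noncomputable def psiRMJ (m : ℕ) (φ : ℝ) : ℝ :=
  ∏ i ∈ Finset.range m, ∑ j ∈ Finset.range (i + 1), φ ^ j

/-- Mallows-RMJ distance of the ordered tuple `μ^k = (y 0, …, y k)` from the
assortment `S`:
`d(μ^k,S) = ∑_{i=1}^{k−1} 𝟙{y_i ranked worse than y_{i+1}}·(n−i)
  + ∑_{y_j ∈ S∖{y_1,…,y_k}} 𝟙{y_k ranked worse than y_j}`,
where "ranked worse" means a strictly larger value of `ρ`. -/
noncomputable def dRMJ {α : Type*} [DecidableEq α] (S : Finset α) (ρ : α → ℝ)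
    {k : ℕ} (y : Fin (k + 1) → α) : ℕ :=
  (∑ i : Fin k,
      if ρ (y i.succ) < ρ (y i.castSucc) then S.card - (↑i + 1) else 0) +
    ∑ z ∈ S \ Finset.univ.image y,
      if ρ z < ρ (y (Fin.last k)) then 1 else 0

/-!
Build the list by appending one element at a time. Let `y` have last entry `b` and remaining
candidates `T = S \ {y₀, …, y_k}`, and let `r` count the `z ∈ T` ranked better than `b`.
Appending `w ∈ T` replaces the tail term `r` of the distance by
`e(w) = |T| · 𝟙{w better than b} + #{z ∈ T better than w}`. As `w` runs over `T`, `e(w) - r`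
takes each value `0, …, |T| - 1` exactly once (it is the position of `w` when `T` is read in
rank order starting just after `b` and wrapping around), so appending multiplies the total
weight by `1 + φ + ⋯ + φ^{|T|-1}`. Hence the weights of the top-`(k+1)` lists add up to
`∏_{i ≤ k} [n - i]_φ = ψ(n) / ψ(n - k - 1)`.
-/
open Finset

section Rank

variable {α : Type*} {T : Finset α} {ρ : α → ℝ}

lemma card_filter_lt_mono {b b' : ℝ} (h : b ≤ b') :
    #{z ∈ T | ρ z < b} ≤ #{z ∈ T | ρ z < b'} :=
  card_le_card (monotone_filter_right T fun _ _ hz => hz.trans_le h)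

lemma card_filter_lt_lt_of_mem {w : α} (hw : w ∈ T) {b b' : ℝ} (hb : b ≤ ρ w)
    (hb' : ρ w < b') : #{z ∈ T | ρ z < b} < #{z ∈ T | ρ z < b'} := by
  refine card_lt_card ((ssubset_iff_of_subset ?_).2 ⟨w, ?_, ?_⟩)
  · exact monotone_filter_right T fun _ _ hz => hz.trans (hb.trans_lt hb')
  · simp [hw, hb']
  · simp [hb]

lemma card_filter_lt_lt_card {w : α} (hw : w ∈ T) : #{z ∈ T | ρ z < ρ w} < #T :=
  card_lt_card (filter_ssubset.2 ⟨w, hw, lt_irrefl _⟩)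

lemma injOn_card_filter_lt (hinj : Set.InjOn ρ T) :
    Set.InjOn (fun w => #{z ∈ T | ρ z < ρ w}) T := by
  intro w hw w' hw' heq
  by_contra hne
  rcases lt_or_gt_of_ne fun h => hne (hinj hw hw' h) with h | h
  · exact (card_filter_lt_lt_of_mem hw le_rfl h).ne heq
  · exact (card_filter_lt_lt_of_mem hw' le_rfl h).ne' heq

lemma sum_pow_card_filter_lt {R : Type*} [Semiring R] (hinj : Set.InjOn ρ T) (φ : R) :
    ∑ w ∈ T, φ ^ #{z ∈ T | ρ z < ρ w} = ∑ j ∈ range #T, φ ^ j := by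
  have hmaps : Set.MapsTo (fun w => #{z ∈ T | ρ z < ρ w}) T (range #T) :=
    fun _ hw => mem_range.2 (card_filter_lt_lt_card hw)
  exact sum_nbij _ hmaps (injOn_card_filter_lt hinj)
    (surjOn_of_injOn_of_card_le _ hmaps (injOn_card_filter_lt hinj) (by simp)) fun _ _ => rfl

/-- The position of `w` in `T` ordered by `ρ` after the elements ranked better than `b` have
been moved behind all others, plus `#{z ∈ T | ρ z < b}`. -/
noncomputable def wrapRank (T : Finset α) (ρ : α → ℝ) (b : ℝ) (w : α) : ℕ :=
  (if ρ w < b then #T else 0) + #{z ∈ T | ρ z < ρ w}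

lemma wrapRank_mem_Ico {b : ℝ} (hb : ∀ z ∈ T, ρ z ≠ b) {w : α} (hw : w ∈ T) :
    wrapRank T ρ b w ∈ Ico #{z ∈ T | ρ z < b} (#{z ∈ T | ρ z < b} + #T) := by
  have hrank := card_filter_lt_lt_card (ρ := ρ) hw
  have hle : #{z ∈ T | ρ z < b} ≤ #T := card_filter_le _ _
  rw [mem_Ico, wrapRank]
  rcases lt_or_gt_of_ne (hb w hw) with hwb | hbw
  · have := card_filter_lt_lt_of_mem hw le_rfl hwb
    rw [if_pos hwb]
    omega
  · have := card_filter_lt_mono (T := T) (ρ := ρ) hbw.le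
    rw [if_neg hbw.not_gt]
    omega

lemma wrapRank_injOn (hinj : Set.InjOn ρ T) (b : ℝ) : Set.InjOn (wrapRank T ρ b) T := by
  have hne : ∀ w ∈ T, ∀ w' ∈ T, ρ w < ρ w' → wrapRank T ρ b w ≠ wrapRank T ρ b w' := by
    intro w hw w' hw' h
    have := card_filter_lt_lt_of_mem hw le_rfl h
    have := card_filter_lt_lt_card (ρ := ρ) hw'
    unfold wrapRank
    split_ifs <;> omega
  intro w hw w' hw' heq
  by_contra hww'
  rcases lt_or_gt_of_ne fun h => hww' (hinj hw hw' h) with h | h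
  · exact hne w hw w' hw' h heq
  · exact hne w' hw' w hw h heq.symm

lemma sum_pow_wrapRank {R : Type*} [Semiring R] (hinj : Set.InjOn ρ T) {b : ℝ}
    (hb : ∀ z ∈ T, ρ z ≠ b) (φ : R) :
    ∑ w ∈ T, φ ^ wrapRank T ρ b w = φ ^ #{z ∈ T | ρ z < b} * ∑ j ∈ range #T, φ ^ j := by
  have hmaps : Set.MapsTo (wrapRank T ρ b) T
      (Ico #{z ∈ T | ρ z < b} (#{z ∈ T | ρ z < b} + #T)) :=
    fun _ hw => wrapRank_mem_Ico hb hw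
  rw [sum_nbij (wrapRank T ρ b) hmaps (wrapRank_injOn hinj b)
    (surjOn_of_injOn_of_card_le _ hmaps (wrapRank_injOn hinj b) (by simp)) fun _ _ => rfl,
    sum_Ico_eq_sum_range, mul_sum]
  simp [pow_add]

end Rank

lemma Fin.image_univ_snoc {α : Type*} [DecidableEq α] {m : ℕ} (y : Fin m → α) (w : α) :
    univ.image (Fin.snoc y w : Fin (m + 1) → α) = insert w (univ.image y) :=
  coe_injective (by simp)

section Tuples

variable {α : Type*} [Fintype α] [DecidableEq α]

open Classical in
noncomputable def injTuples (S : Finset α) (m : ℕ) : Finset (Fin m → α) :=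
  univ.filter fun y => Function.Injective y ∧ ∀ i, y i ∈ S

variable {S : Finset α}

lemma mem_injTuples {m : ℕ} {y : Fin m → α} :
    y ∈ injTuples S m ↔ Function.Injective y ∧ ∀ i, y i ∈ S := by
  simp [injTuples]

lemma snoc_mem_injTuples_iff {m : ℕ} {y : Fin m → α} {w : α} :
    (Fin.snoc y w : Fin (m + 1) → α) ∈ injTuples S (m + 1) ↔
      y ∈ injTuples S m ∧ w ∈ S \ univ.image y := by
  simp only [mem_injTuples, Fin.snoc_injective_iff, Fin.forall_fin_succ', Fin.snoc_castSucc,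
    Fin.snoc_last, mem_sdiff, mem_image, mem_univ, true_and, Set.mem_range]
  tauto

lemma sum_injTuples_succ {M : Type*} [AddCommMonoid M] {m : ℕ} (f : (Fin (m + 1) → α) → M) :
    ∑ y ∈ injTuples S (m + 1), f y =
      ∑ y ∈ injTuples S m, ∑ w ∈ S \ univ.image y, f (Fin.snoc y w) := by
  rw [sum_sigma']
  symm
  refine sum_nbij' (fun p : (_ : Fin m → α) × α => Fin.snoc p.1 p.2)
    (fun y : Fin (m + 1) → α => ⟨Fin.init y, y (Fin.last m)⟩) ?_ ?_ ?_ ?_ fun _ _ => rfl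
  · rintro ⟨y, w⟩ hp
    exact snoc_mem_injTuples_iff.2 (mem_sigma.1 hp)
  · intro y hy
    rw [← Fin.snoc_init_self y, snoc_mem_injTuples_iff] at hy
    exact mem_sigma.2 hy
  · rintro ⟨y, w⟩ -
    simp
  · intro y _
    exact Fin.snoc_init_self y

lemma card_sdiff_image_of_mem_injTuples {m : ℕ} {y : Fin m → α} (hy : y ∈ injTuples S m) :
    #(S \ univ.image y) = #S - m := by
  obtain ⟨hinj, hS⟩ := mem_injTuples.1 hy
  rw [card_sdiff_of_subset (image_subset_iff.2 fun i _ => hS i), card_image_of_injective _ hinj,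
    card_univ, Fintype.card_fin]

end Tuples

section RMJ

variable {α : Type*} (S : Finset α) (ρ : α → ℝ)

noncomputable def adjacentPenalty {k : ℕ} (y : Fin (k + 1) → α) : ℕ :=
  ∑ i : Fin k, if ρ (y i.succ) < ρ (y i.castSucc) then #S - (i + 1) else 0

lemma adjacentPenalty_snoc {k : ℕ} (y : Fin (k + 1) → α) (w : α) :
    adjacentPenalty S ρ (Fin.snoc y w : Fin (k + 2) → α) =
      adjacentPenalty S ρ y + if ρ w < ρ (y (Fin.last k)) then #S - (k + 1) else 0 := by
  rw [adjacentPenalty, Fin.sum_univ_castSucc]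
  simp only [← Fin.castSucc_succ, Fin.snoc_castSucc, Fin.succ_last, Fin.snoc_last, Fin.val_last]
  rfl

variable [DecidableEq α]

lemma dRMJ_eq_adjacentPenalty_add {k : ℕ} (y : Fin (k + 1) → α) :
    dRMJ S ρ y =
      adjacentPenalty S ρ y + #{z ∈ S \ univ.image y | ρ z < ρ (y (Fin.last k))} := by
  rw [dRMJ, adjacentPenalty, card_filter]

lemma card_filter_sdiff_image_snoc {m : ℕ} (y : Fin m → α) (w : α) :
    #{z ∈ S \ univ.image (Fin.snoc y w : Fin (m + 1) → α) | ρ z < ρ w} =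
      #{z ∈ S \ univ.image y | ρ z < ρ w} := by
  rw [Fin.image_univ_snoc, sdiff_insert, filter_erase, erase_eq_of_notMem]
  simp

end RMJ

section Weights

variable {α : Type*} [Fintype α] [DecidableEq α] {S : Finset α} {ρ : α → ℝ}
  {R : Type*} [Semiring R]

lemma dRMJ_snoc {k : ℕ} {y : Fin (k + 1) → α} (hy : y ∈ injTuples S (k + 1)) (w : α) :
    dRMJ S ρ (Fin.snoc y w : Fin (k + 2) → α) =
      adjacentPenalty S ρ y + wrapRank (S \ univ.image y) ρ (ρ (y (Fin.last k))) w := by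
  rw [dRMJ_eq_adjacentPenalty_add, adjacentPenalty_snoc, Fin.snoc_last,
    card_filter_sdiff_image_snoc, wrapRank, card_sdiff_image_of_mem_injTuples hy, add_assoc]

lemma sum_pow_dRMJ_injTuples_one (hinj : Set.InjOn ρ S) (φ : R) :
    ∑ y ∈ injTuples S 1, φ ^ dRMJ S ρ y = ∑ j ∈ range #S, φ ^ j := by
  have hzero : injTuples S 0 = univ :=
    filter_true_of_mem fun y _ => ⟨Function.injective_of_subsingleton y, finZeroElim⟩
  rw [sum_injTuples_succ, hzero, Fintype.sum_unique, ← sum_pow_card_filter_lt hinj]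
  refine sum_congr (by simp) fun w _ => ?_
  rw [dRMJ_eq_adjacentPenalty_add, Fin.snoc_last, card_filter_sdiff_image_snoc]
  simp [adjacentPenalty]

lemma sum_pow_dRMJ_injTuples_succ (hinj : Set.InjOn ρ S) (φ : R) (k : ℕ) :
    ∑ y ∈ injTuples S (k + 2), φ ^ dRMJ S ρ y =
      (∑ y ∈ injTuples S (k + 1), φ ^ dRMJ S ρ y) * ∑ j ∈ range (#S - (k + 1)), φ ^ j := by
  rw [sum_injTuples_succ, sum_mul]
  refine sum_congr rfl fun y hy => ?_
  have hyS := (mem_injTuples.1 hy).2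
  have hb : ∀ z ∈ S \ univ.image y, ρ z ≠ ρ (y (Fin.last k)) := by
    intro z hz hzy
    rw [hinj (mem_sdiff.1 hz).1 (hyS _) hzy] at hz
    simp at hz
  simp only [dRMJ_snoc hy, pow_add]
  rw [← mul_sum, sum_pow_wrapRank (hinj.mono (by simp)) hb, dRMJ_eq_adjacentPenalty_add,
    card_sdiff_image_of_mem_injTuples hy, pow_add, mul_assoc]

end Weights

lemma psiRMJ_succ (m : ℕ) (φ : ℝ) :
    psiRMJ (m + 1) φ = psiRMJ m φ * ∑ j ∈ range (m + 1), φ ^ j :=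
  prod_range_succ _ _

lemma psiRMJ_pos (m : ℕ) {φ : ℝ} (hφ : 0 < φ) : 0 < psiRMJ m φ :=
  prod_pos fun _ _ => sum_pos (fun j _ => pow_pos hφ j) ⟨0, by simp⟩

theorem psiRMJ_sub_mul_sum_pow_dRMJ {α : Type*} [Fintype α] [DecidableEq α] {S : Finset α}
    {ρ : α → ℝ} (hinj : Set.InjOn ρ S) (φ : ℝ) {k : ℕ} (hk : k + 1 ≤ #S) :
    psiRMJ (#S - (k + 1)) φ * ∑ y ∈ injTuples S (k + 1), φ ^ dRMJ S ρ y = psiRMJ #S φ := by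
  induction k with
  | zero =>
    obtain ⟨n, hn⟩ : ∃ n, #S = n + 1 := ⟨#S - 1, by omega⟩
    rw [sum_pow_dRMJ_injTuples_one hinj, hn, Nat.add_sub_cancel, psiRMJ_succ]
  | succ k ih =>
    have hsucc : #S - (k + 1) = #S - (k + 2) + 1 := by omega
    rw [sum_pow_dRMJ_injTuples_succ hinj, ← ih (by omega), hsucc, psiRMJ_succ]
    ring

open Classical in
theorem mallowsRMJ_topk_sum_to_one {α : Type*} [Fintype α] [DecidableEq α]
    (S : Finset α) (ρ : α → ℝ) (hinj : Set.InjOn ρ ↑S)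
    (φ : ℝ) (hφ : 0 < φ) (k : ℕ) (hk : k + 1 ≤ S.card) :
    ∑ y ∈ (Finset.univ : Finset (Fin (k + 1) → α)).filter
        (fun y => Function.Injective y ∧ ∀ i, y i ∈ S),
      psiRMJ (S.card - (k + 1)) φ / psiRMJ S.card φ * φ ^ dRMJ S ρ y = 1 := by
  rw [← mul_sum, div_mul_eq_mul_div, div_eq_one_iff_eq (psiRMJ_pos _ hφ).ne']
  exact psiRMJ_sub_mul_sum_pow_dRMJ hinj φ hk
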